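/- In the environment E of Example 5 (states E, E₀ with transitions E →a₀ E₀ on public action a₀ and E₀ →b E on private action b), for every process M over public alphabet {a₀}: either E ∥ M deadlocks (has a maximal finite computation), or E ∥ M has an infinite computation with infinitely many b actions. Hence the coordination problem (E, ◇□¬b) with no acceptable finite computations is unrealizable. -/
import Mathlib


/-- Actions of Example 5: public `a0`, private `b`. -/
inductive Act where
  | a0 : Act
  | b : Act
deriving DecidableEq

/-- Environment states of Example 5. -/
inductive ESt where
  | E : ESt
  | E0 : ESt
deriving DecidableEq

/-- Environment transitions: E →a₀ E₀ and E₀ →b E. -/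
def Etrans : ESt → Act → ESt → Prop := fun s a t =>
  match s, a, t with
  | .E, .a0, .E0 => True
  | .E0, .b, .E => True
  | _, _, _ => False

/-- Composition `E ∥ M`: synchronize on the public action `a0`,
the private action `b` interleaves freely. -/
def Ctrans {S : Type*} (mtrans : S → Act → S → Prop) :
    ESt × S → Act → ESt × S → Prop := fun c a c' =>
  (a = .a0 ∧ Etrans c.1 a c'.1 ∧ mtrans c.2 a c'.2) ∨
  (a = .b ∧ Etrans c.1 a c'.1 ∧ c'.2 = c.2)

inductive Reach {S : Type*} (init : S) (tr : S → Act → S → Prop) : List Act → S → Prop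
  | nil : Reach init tr [] init
  | snoc {σ s a t} : Reach init tr σ s → tr s a t → Reach init tr (σ ++ [a]) t

/-- Example 5 is unrealizable: for every process `M` over public alphabet
`{a₀}`, either `E ∥ M` deadlocks (has a maximal finite computation), or
`E ∥ M` has an infinite computation with infinitely many `b` actions. -/
theorem example5_unrealizable {S : Type*} (minit : S) (mtrans : S → Act → S → Prop)
    (hpub : ∀ s a t, mtrans s a t → a = .a0) :
    (∃ (σ : List Act) (c : ESt × S), Reach (ESt.E, minit) (Ctrans mtrans) σ c ∧
        ∀ a c', ¬ Ctrans mtrans c a c') ∨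
    (∃ (ss : ℕ → ESt × S) (as : ℕ → Act), ss 0 = (ESt.E, minit) ∧
        (∀ i, Ctrans mtrans (ss i) (as i) (ss (i + 1))) ∧
        {i | as i = Act.b}.Infinite) := by

  classical
  by_cases hdl : ∃ (σ : List Act) (c : ESt × S),
      Reach (ESt.E, minit) (Ctrans mtrans) σ c ∧ ∀ a c', ¬ Ctrans mtrans c a c'
  · exact Or.inl hdl
  · right
    push_neg at hdl
    -- every reachable state has a successor
    have H : ∀ (σ : List Act) (c : ESt × S), Reach (ESt.E, minit) (Ctrans mtrans) σ c →
        ∃ a c', Ctrans mtrans c a c' := hdl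
    set tr := Ctrans mtrans with htr
    let Pkg := Σ' (σ : List Act) (c : ESt × S), Reach (ESt.E, minit) tr σ c
    have hex : ∀ p : Pkg, ∃ a c', tr p.2.1 a c' := fun p => H p.1 p.2.1 p.2.2
    let act : Pkg → Act := fun p => (hex p).choose
    let nxt : Pkg → ESt × S := fun p => (hex p).choose_spec.choose
    have hstep : ∀ p : Pkg, tr p.2.1 (act p) (nxt p) :=
      fun p => (hex p).choose_spec.choose_spec
    let step : Pkg → Pkg := fun p => ⟨p.1 ++ [act p], nxt p, .snoc p.2.2 (hstep p)⟩
    let pkg : ℕ → Pkg := fun n => step^[n] ⟨[], (ESt.E, minit), .nil⟩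
    have hpkg : ∀ n, pkg (n + 1) = step (pkg n) := by
      intro n
      simp only [pkg, Function.iterate_succ_apply']
    let ss : ℕ → ESt × S := fun n => (pkg n).2.1
    let as : ℕ → Act := fun n => act (pkg n)
    have htrans : ∀ i, tr (ss i) (as i) (ss (i + 1)) := by
      intro i
      have := hstep (pkg i)
      have h2 : ss (i + 1) = nxt (pkg i) := by
        show (pkg (i + 1)).2.1 = nxt (pkg i)
        rw [hpkg i]
      rw [h2]; exact this
    refine ⟨ss, as, rfl, htrans, ?_⟩
    have key : ∀ i, as i = Act.b ∨ as (i + 1) = Act.b := by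
      intro i
      rcases htrans i with ⟨_, he, _⟩ | ⟨hb, _, _⟩
      · -- a0 step: env goes E → E0
        have hE0 : (ss (i + 1)).1 = ESt.E0 := by
          rcases h1 : (ss i).1 <;> rcases h2 : (ss (i+1)).1 <;>
            rw [h1, h2] at he <;> simp_all [Etrans]
        right
        rcases htrans (i + 1) with ⟨_, he2, _⟩ | ⟨hb2, _, _⟩
        · exfalso
          rw [hE0] at he2
          rcases h2 : (ss (i+2)).1 <;> rw [h2] at he2 <;> simp_all [Etrans]
        · exact hb2
      · exact Or.inl hb
    apply Set.infinite_of_not_bddAbove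
    intro ⟨n, hn⟩
    rcases key (n + 1) with h | h
    · exact absurd (hn h) (by omega)
    · exact absurd (hn h) (by omega)
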